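/- Let G be an acyclic directed graph and let a, b, c be vertices. Path concatenation, sending a pair (p, q) with p a path from a to b and q a path from b to c to the concatenated path p ⋆ q, is a bijection from (paths from a to b) × (paths from b to c) onto the set of paths from a to c that pass through b. -/

import Mathlib

universe v u

/-- A quiver (directed graph) is *acyclic* if for every vertex `a`, the only path from `a`
back to `a` is the nil path. -/
def Quiver.IsAcyclic (V : Type*) [Quiver V] : Prop :=
  ∀ (a : V) (p : Quiver.Path a a), p = Quiver.Path.nil

/-- The list of vertices visited along a path, including both endpoints
(the starting vertex comes first). -/
def Quiver.Path.visitedVertices {V : Type*} [Quiver V] {a : V} :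
    ∀ {b : V}, Quiver.Path a b → List V
  | _, Quiver.Path.nil => [a]
  | b, Quiver.Path.cons p _ => Quiver.Path.visitedVertices p ++ [b]

/-- A path *passes through* a vertex `w` if `w` is one of the vertices visited along it. -/
def Quiver.Path.PassesThrough {V : Type*} [Quiver V] {a b : V}
    (p : Quiver.Path a b) (w : V) : Prop :=
  w ∈ p.visitedVertices

/-! Concatenation is surjective onto the paths through `b` by cutting such a path at `b`. For
injectivity, two factorizations `p₁ ⋆ q₁ = p₂ ⋆ q₂` at the same vertex `b` always differ by a loop
`r` at `b` (`p₁ = p₂ ⋆ r`, `q₂ = r ⋆ q₁` when `q₁` is the shorter tail), and acyclicity forces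
`r` to be the nil path. -/

namespace Quiver

namespace Path

variable {V : Type*} [Quiver V]

theorem visitedVertices_eq_vertices {a b : V} (p : Path a b) : p.visitedVertices = p.vertices := by
  induction p with
  | nil => rfl
  | cons p e ih => simp [visitedVertices, ih]

theorem passesThrough_iff_mem_vertices {a b : V} (p : Path a b) (w : V) :
    p.PassesThrough w ↔ w ∈ p.vertices := by
  rw [PassesThrough, visitedVertices_eq_vertices]

theorem range_comp_eq_setOf_passesThrough (a b c : V) :
    Set.range (fun pq : Path a b × Path b c => pq.1.comp pq.2) = {p | p.PassesThrough b} := by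
  ext p
  simp only [Set.mem_range, Prod.exists, Set.mem_ofPred_eq, passesThrough_iff_mem_vertices]
  constructor
  · rintro ⟨p₁, p₂, rfl⟩
    simp [start_mem_vertices]
  · intro hb
    obtain ⟨p₁, p₂, rfl⟩ := p.exists_eq_comp_of_mem_vertices hb
    exact ⟨p₁, p₂, rfl⟩

theorem exists_loop_of_comp_eq_comp {a b c : V} {p₁ p₂ : Path a b} {q₁ q₂ : Path b c}
    (h : p₁.comp q₁ = p₂.comp q₂) (hlen : q₁.length ≤ q₂.length) :
    ∃ r : Path b b, p₁ = p₂.comp r ∧ q₂ = r.comp q₁ := by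
  induction q₁ with
  | nil => exact ⟨q₂, h, rfl⟩
  | cons q₁ e ih =>
    cases q₂ with
    | nil => simp at hlen
    | cons q₂ e₂ =>
      simp only [comp_cons] at h
      obtain rfl := obj_eq_of_cons_eq_cons h
      obtain ⟨r, hp, hq⟩ :=
        ih (eq_of_heq (heq_of_cons_eq_cons h)) (by simpa using hlen)
      exact ⟨r, hp, by rw [hq, eq_of_heq (hom_heq_of_cons_eq_cons h), comp_cons]⟩

end Path

theorem IsAcyclic.comp_inj {V : Type*} [Quiver V] (hG : IsAcyclic V) {a b c : V}
    {p₁ p₂ : Path a b} {q₁ q₂ : Path b c} :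
    p₁.comp q₁ = p₂.comp q₂ ↔ p₁ = p₂ ∧ q₁ = q₂ := by
  refine ⟨fun h => ?_, fun ⟨hp, hq⟩ => hp ▸ hq ▸ rfl⟩
  wlog hlen : q₁.length ≤ q₂.length generalizing p₁ p₂ q₁ q₂
  · exact (this h.symm (le_of_not_ge hlen)).imp Eq.symm Eq.symm
  obtain ⟨r, hp, hq⟩ := Path.exists_loop_of_comp_eq_comp h hlen
  rw [hG b r, Path.comp_nil] at hp
  rw [hG b r, Path.nil_comp] at hq
  exact ⟨hp, hq.symm⟩

end Quiver

/-- In an acyclic directed graph, path concatenation `(p, q) ↦ p ⋆ q` is injective on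
`(paths a → b) × (paths b → c)`, and its range is exactly the set of paths from `a` to `c`
that pass through `b`; i.e. it is a bijection onto that set. -/
theorem comp_bijective_onto_passesThrough {V : Type u} [Quiver.{v + 1} V]
    (hG : Quiver.IsAcyclic V) (a b c : V) :
    Function.Injective
        (fun pq : Quiver.Path a b × Quiver.Path b c => pq.1.comp pq.2) ∧
      Set.range (fun pq : Quiver.Path a b × Quiver.Path b c => pq.1.comp pq.2)
        = {p : Quiver.Path a c | p.PassesThrough b} := by
  refine ⟨?_, Quiver.Path.range_comp_eq_setOf_passesThrough a b c⟩
  rintro ⟨p₁, q₁⟩ ⟨p₂, q₂⟩ h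
  obtain ⟨rfl, rfl⟩ := hG.comp_inj.mp h
  rfl
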